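/- If ρ is a separable bipartite density matrix, then the negativity-based quantity max{‖ρ^{T₁}‖₁ − 1, ‖ρ^{T₂}‖₁ − 1} equals 0. Consequently, if this quantity is strictly positive, ρ is entangled (not separable). -/

import Mathlib

open Matrix
open scoped Kronecker Classical ComplexOrder

noncomputable section

/-- A density matrix: positive semidefinite with unit trace. -/
def IsDensity {N : Type*} [Fintype N] (ρ : Matrix N N ℂ) : Prop :=
  ρ.PosSemidef ∧ ρ.trace = 1

/-- Outer product `|ψ⟩⟨ψ|`. -/
def outer {N : Type*} (ψ : N → ℂ) : Matrix N N ℂ :=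
  Matrix.of fun i j => ψ i * star (ψ j)

/-- Squared norm of a vector. -/
def vnormSq {N : Type*} [Fintype N] (ψ : N → ℂ) : ℝ := ∑ x, ‖ψ x‖ ^ 2

/-- Partial transpose with respect to the first tensor factor. -/
def pt₁ {m n : Type*} (ρ : Matrix (m × n) (m × n) ℂ) : Matrix (m × n) (m × n) ℂ :=
  Matrix.of fun p q => ρ (q.1, p.2) (p.1, q.2)

/-- Partial transpose with respect to the second tensor factor. -/
def pt₂ {m n : Type*} (ρ : Matrix (m × n) (m × n) ℂ) : Matrix (m × n) (m × n) ℂ :=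
  Matrix.of fun p q => ρ (p.1, q.2) (q.1, p.2)

/-- Partial trace over the first tensor factor. -/
def ptr₁ {m n : Type*} [Fintype m] (ρ : Matrix (m × n) (m × n) ℂ) : Matrix n n ℂ :=
  Matrix.of fun j l => ∑ i, ρ (i, j) (i, l)

/-- Partial trace over the second tensor factor. -/
def ptr₂ {m n : Type*} [Fintype n] (ρ : Matrix (m × n) (m × n) ℂ) : Matrix m m ℂ :=
  Matrix.of fun i k => ∑ j, ρ (i, j) (k, j)

/-- Trace norm (sum of singular values): `‖A‖₁ = tr √(AᴴA)`. -/
def traceNorm {N : Type*} [Fintype N] [DecidableEq N] (A : Matrix N N ℂ) : ℝ :=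
  (((Matrix.posSemidef_conjTranspose_mul_self A).1.eigenvectorUnitary : Matrix N N ℂ) *
    diagonal (((↑) : ℝ → ℂ) ∘ Real.sqrt ∘ (Matrix.posSemidef_conjTranspose_mul_self A).1.eigenvalues) *
    (star ((Matrix.posSemidef_conjTranspose_mul_self A).1.eigenvectorUnitary : Matrix N N ℂ))).trace.re

/-- Purity `tr ρ²` (real part). -/
def purity {N : Type*} [Fintype N] (ρ : Matrix N N ℂ) : ℝ := ((ρ * ρ).trace).re

/-- Separability of a bipartite density matrix. -/
def Separable {m n : Type*} [Fintype m] [Fintype n]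
    (ρ : Matrix (m × n) (m × n) ℂ) : Prop :=
  ∃ (k : ℕ) (p : Fin k → ℝ) (σ : Fin k → Matrix m m ℂ) (τ : Fin k → Matrix n n ℂ),
    (∀ i, 0 ≤ p i) ∧ (∑ i, p i = 1) ∧ (∀ i, IsDensity (σ i)) ∧ (∀ i, IsDensity (τ i)) ∧
    ρ = ∑ i, (p i : ℂ) • (σ i ⊗ₖ τ i)

/-- Extension `E ⊗ id` of a map on the first factor to a bipartite space. -/
def tensExtA {s n : Type*} (E : Matrix s s ℂ → Matrix s s ℂ)
    (X : Matrix (s × n) (s × n) ℂ) : Matrix (s × n) (s × n) ℂ :=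
  Matrix.of fun p q => E (Matrix.of fun i k => X (i, p.2) (k, q.2)) p.1 q.1

/-- Extension `id ⊗ A` of a map on the second factor to a bipartite space. -/
def tensExtSys {e s : Type*} (A : Matrix s s ℂ → Matrix s s ℂ)
    (X : Matrix (e × s) (e × s) ℂ) : Matrix (e × s) (e × s) ℂ :=
  Matrix.of fun p q => A (Matrix.of fun i k => X (p.1, i) (q.1, k)) p.2 q.2

/-- Complete positivity: `E ⊗ id_n` maps PSD matrices to PSD matrices for every `n`. -/
def IsCP {s : Type*} [Fintype s] (E : Matrix s s ℂ → Matrix s s ℂ) : Prop :=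
  ∀ (n : ℕ) (X : Matrix (s × Fin n) (s × Fin n) ℂ), X.PosSemidef → (tensExtA E X).PosSemidef

/-- Trace preservation. -/
def IsTP {s : Type*} [Fintype s] (E : Matrix s s ℂ → Matrix s s ℂ) : Prop :=
  ∀ X, (E X).trace = X.trace

/-- The maximally entangled unit vector `|Ψ⁺⟩ = (1/√d) Σᵢ |i⟩⊗|i⟩`. -/
def maxEntVec (d : ℕ) : Fin d × Fin d → ℂ :=
  fun p => if p.1 = p.2 then (((Real.sqrt d)⁻¹ : ℝ) : ℂ) else 0

/-- The Choi state `χ[E] = (E ⊗ id)(|Ψ⁺⟩⟨Ψ⁺|)` of a map `E`. -/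
def ChoiMap {d : ℕ} (E : Matrix (Fin d) (Fin d) ℂ → Matrix (Fin d) (Fin d) ℂ) :
    Matrix (Fin d × Fin d) (Fin d × Fin d) ℂ :=
  tensExtA E (outer (maxEntVec d))

/-- Choi state of a single-intervention process tensor `T`, viewed as a function of the
initial system state and the intervention (a CP map). The first index pair is the first
time segment (intervention input leg, initial state leg), the second pair is the second
time segment (final state leg, intervention output leg). It is obtained by letting `T`
act on halves of maximally entangled pairs, i.e. on matrix units with `1/d` weights. -/
def ChoiPT {d : ℕ}
    (T : Matrix (Fin d) (Fin d) ℂ →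
      (Matrix (Fin d) (Fin d) ℂ → Matrix (Fin d) (Fin d) ℂ) → Matrix (Fin d) (Fin d) ℂ) :
    Matrix ((Fin d × Fin d) × (Fin d × Fin d)) ((Fin d × Fin d) × (Fin d × Fin d)) ℂ :=
  Matrix.of fun p q => (d : ℂ)⁻¹ * (d : ℂ)⁻¹ *
    (T (Matrix.single p.1.2 q.1.2 1)
       (fun ρ => ρ p.1.1 q.1.1 • Matrix.single p.2.2 q.2.2 1)) p.2.1 q.2.1

/-- A single-intervention process tensor has classical memory if it is a composition of
conditioned instruments: `T[ρ, A] = Σᵢ Φᵢ(A(Iᵢ(ρ)))` with `{Iᵢ}` a quantum instrument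
(each `Iᵢ` CP, their sum trace preserving) and each `Φᵢ` a CPT map. -/
def HasClassicalMemory {d : ℕ}
    (T : Matrix (Fin d) (Fin d) ℂ →
      (Matrix (Fin d) (Fin d) ℂ → Matrix (Fin d) (Fin d) ℂ) → Matrix (Fin d) (Fin d) ℂ) :
    Prop :=
  ∃ (k : ℕ) (I Φ : Fin k → (Matrix (Fin d) (Fin d) ℂ → Matrix (Fin d) (Fin d) ℂ)),
    (∀ i, IsLinearMap ℂ (I i)) ∧ (∀ i, IsCP (I i)) ∧ IsTP (fun ρ => ∑ i, I i ρ) ∧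
    (∀ i, IsLinearMap ℂ (Φ i)) ∧ (∀ i, IsCP (Φ i)) ∧ (∀ i, IsTP (Φ i)) ∧
    (∀ ρ A, T ρ A = ∑ i, Φ i (A (I i ρ)))

/-- Action of a Kraus operator on the first factor of a bipartite vector: `(L ⊗ I)ψ`. -/
def lact {m n : Type*} [Fintype m] (L : Matrix m m ℂ) (ψ : m × n → ℂ) : m × n → ℂ :=
  fun p => ∑ i, L p.1 i * ψ (i, p.2)

/-- Concurrence of a pure bipartite state: `C(ψ) = √(2(1 − tr((tr₂|ψ⟩⟨ψ|)²)))`. -/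
def concPure {m n : Type*} [Fintype m] [Fintype n] (ψ : m × n → ℂ) : ℝ :=
  Real.sqrt (2 * (1 - purity (ptr₂ (outer ψ))))

/-- The set of average values `Σₖ pₖ f(ψₖ)` over all pure-state decompositions of `ρ`. -/
def decompAvgs {m n : Type*} [Fintype m] [Fintype n]
    (f : (m × n → ℂ) → ℝ) (ρ : Matrix (m × n) (m × n) ℂ) : Set ℝ :=
  { r | ∃ (k : ℕ) (p : Fin k → ℝ) (ψ : Fin k → m × n → ℂ),
      (∀ i, 0 < p i) ∧ (∑ i, p i = 1) ∧ (∀ i, vnormSq (ψ i) = 1) ∧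
      (ρ = ∑ i, (p i : ℂ) • outer (ψ i)) ∧ r = ∑ i, p i * f (ψ i) }

/-- An entanglement monotone: a nonnegative function of pure bipartite states whose
average does not increase under local CP operations (given by Kraus operators) on the
system (first) factor. -/
def IsEntMonotone {m n : Type*} [Fintype m] [Fintype n] (f : (m × n → ℂ) → ℝ) : Prop :=
  (∀ ψ, 0 ≤ f ψ) ∧
  ∀ (k : ℕ) (L : Fin k → Matrix m m ℂ), (∑ j, (L j)ᴴ * L j) = 1 →
    ∀ ψ : m × n → ℂ, vnormSq ψ = 1 →
      (∑ j, if vnormSq (lact (L j) ψ) = 0 then 0 else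
        vnormSq (lact (L j) ψ) *
          f (fun x => (((Real.sqrt (vnormSq (lact (L j) ψ)))⁻¹ : ℝ) : ℂ) * lact (L j) ψ x))
        ≤ f ψ

end

/-! A product state stays positive under partial transposition, since `(σ ⊗ τ)^{T₁} = σᵀ ⊗ τ`
and `σᵀ` is again positive; by linearity so does every separable state. Thus `ρ^{T₁}` and
`ρ^{T₂} = (ρ^{T₁})ᵀ` are positive semidefinite, and the trace norm of a positive semidefinite
matrix is its trace, which partial transposition preserves: both trace norms equal `tr ρ = 1`. -/

section PartialTranspose

variable {m n : Type*}

lemma pt₁_kronecker (σ : Matrix m m ℂ) (τ : Matrix n n ℂ) : pt₁ (σ ⊗ₖ τ) = σᵀ ⊗ₖ τ := rfl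

lemma pt₂_eq_transpose_pt₁ (ρ : Matrix (m × n) (m × n) ℂ) : pt₂ ρ = (pt₁ ρ)ᵀ := rfl

lemma pt₁_sum {ι : Type*} (s : Finset ι) (c : ι → ℂ) (M : ι → Matrix (m × n) (m × n) ℂ) :
    pt₁ (∑ i ∈ s, c i • M i) = ∑ i ∈ s, c i • pt₁ (M i) := by
  ext p q
  simp [pt₁, Matrix.sum_apply]

lemma trace_pt₁ [Fintype m] [Fintype n] (ρ : Matrix (m × n) (m × n) ℂ) :
    (pt₁ ρ).trace = ρ.trace := by
  simp [Matrix.trace, pt₁]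

lemma Separable.posSemidef_pt₁ [Fintype m] [Fintype n] {ρ : Matrix (m × n) (m × n) ℂ}
    (hρ : Separable ρ) : (pt₁ ρ).PosSemidef := by
  obtain ⟨k, p, σ, τ, hp, -, hσ, hτ, rfl⟩ := hρ
  rw [pt₁_sum]
  refine posSemidef_sum _ fun i _ => ?_
  rw [pt₁_kronecker]
  exact ((hσ i).1.transpose.kronecker (hτ i).1).smul (by exact_mod_cast hp i)

end PartialTranspose

open scoped MatrixOrder in
lemma traceNorm_eq_trace_re {N : Type*} [Fintype N] [DecidableEq N] {A : Matrix N N ℂ}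
    (hA : A.PosSemidef) : traceNorm A = A.trace.re := by
  have hH := (posSemidef_conjTranspose_mul_self A).1
  have hAA : Aᴴ * A = A * A := by rw [hA.1]
  -- the matrix inside `traceNorm` is `√(AᴴA)`, and `√(A * A) = A` for `A ≥ 0`
  have hsqrt : (hH.eigenvectorUnitary : Matrix N N ℂ) *
      diagonal (((↑) : ℝ → ℂ) ∘ Real.sqrt ∘ hH.eigenvalues) *
      star (hH.eigenvectorUnitary : Matrix N N ℂ) = A := by
    change hH.cfc Real.sqrt = A
    rw [← hH.cfc_eq, ← cfcₙ_eq_cfc, hAA, ← CFC.sqrt_eq_real_sqrt (A * A)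
      (by rw [← hAA]; exact (posSemidef_conjTranspose_mul_self A).nonneg),
      CFC.sqrt_mul_self A hA.nonneg]
  rw [traceNorm, hsqrt]

lemma Separable.traceNorm_pt₁ {m n : Type*} [Fintype m] [Fintype n] [DecidableEq m]
    [DecidableEq n] {ρ : Matrix (m × n) (m × n) ℂ} (hρ : Separable ρ) :
    traceNorm (pt₁ ρ) = ρ.trace.re := by
  rw [traceNorm_eq_trace_re hρ.posSemidef_pt₁, trace_pt₁]

lemma Separable.traceNorm_pt₂ {m n : Type*} [Fintype m] [Fintype n] [DecidableEq m]
    [DecidableEq n] {ρ : Matrix (m × n) (m × n) ℂ} (hρ : Separable ρ) :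
    traceNorm (pt₂ ρ) = ρ.trace.re := by
  rw [pt₂_eq_transpose_pt₁, traceNorm_eq_trace_re hρ.posSemidef_pt₁.transpose, trace_transpose,
    trace_pt₁]

/-- for separable ρ the negativity-based quantity vanishes; consequently,
if it is strictly positive then ρ is entangled. -/
theorem stmt2 {m n : Type*} [Fintype m] [Fintype n] [DecidableEq m] [DecidableEq n]
    (ρ : Matrix (m × n) (m × n) ℂ) (hρ : IsDensity ρ) :
    (Separable ρ → max (traceNorm (pt₁ ρ) - 1) (traceNorm (pt₂ ρ) - 1) = 0) ∧
    (0 < max (traceNorm (pt₁ ρ) - 1) (traceNorm (pt₂ ρ) - 1) → ¬ Separable ρ) := by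
  have hvanish (hsep : Separable ρ) :
      max (traceNorm (pt₁ ρ) - 1) (traceNorm (pt₂ ρ) - 1) = 0 := by
    simp [hsep.traceNorm_pt₁, hsep.traceNorm_pt₂, hρ.2]
  exact ⟨hvanish, fun hpos hsep => hpos.ne' (hvanish hsep)⟩
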